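/- Let 0 < η₁ < η₂ and set D₋ = [−η₂, −η₁], D₊ = [η₁, η₂], D = D₋ ∪ D₊. Let f₁ be analytic on an open complex neighborhood of D₋ and real-valued on D₋, let f₂ be analytic on an open complex neighborhood of D₊ and real-valued on D₊, and define f : D → ℝ by f = f₁ on D₋ and f = f₂ on D₊. Then there exist functions g, h : [η₁², η₂²] → ℝ, each the restriction of a function analytic on an open complex neighborhood of [η₁², η₂²], such that f(x) = g(x²) + x·h(x²) for every x ∈ D. -/

import Mathlib

/-- `f : ℝ → ℝ` restricted to `s` is the restriction of a function analytic on an open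
complex neighborhood of `s`. -/
def RestrictionOfAnalytic (f : ℝ → ℝ) (s : Set ℝ) : Prop :=
  ∃ (F : ℂ → ℂ) (U : Set ℂ), IsOpen U ∧ (Complex.ofReal '' s) ⊆ U ∧
    AnalyticOnNhd ℂ F U ∧ ∀ x ∈ s, F x = (f x : ℂ)

/-!
With `g(t) = (f(√t) + f(-√t)) / 2` and `h(t) = (f(√t) - f(-√t)) / (2√t)` the identity
`f(x) = g(x²) + x h(x²)` holds for every `x ≠ 0`. The principal branch `z ^ (1/2)` extends `√`
analytically to the slit plane, and `√`, `-√` map `[η₁², η₂²]` into the two components of `D`;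
so `g` and `h` arise from the two analytic pieces of `f` by composition and field operations,
which preserve being the restriction of an analytic function.
-/

open Set

namespace RestrictionOfAnalytic

variable {f g φ : ℝ → ℝ} {s t : Set ℝ}

theorem mono (hf : RestrictionOfAnalytic f s) (hts : t ⊆ s) : RestrictionOfAnalytic f t := by
  obtain ⟨F, U, hU, hsU, hF, hFf⟩ := hf
  exact ⟨F, U, hU, (image_mono hts).trans hsU, hF, fun x hx => hFf x (hts hx)⟩

theorem const (c : ℝ) (s : Set ℝ) : RestrictionOfAnalytic (fun _ => c) s :=
  ⟨fun _ => c, univ, isOpen_univ, subset_univ _, fun _ _ => analyticAt_const, fun _ _ => rfl⟩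

theorem neg (hf : RestrictionOfAnalytic f s) : RestrictionOfAnalytic (-f) s := by
  obtain ⟨F, U, hU, hsU, hF, hFf⟩ := hf
  exact ⟨-F, U, hU, hsU, fun z hz => (hF z hz).neg, fun x hx => by simp [hFf x hx]⟩

theorem add (hf : RestrictionOfAnalytic f s) (hg : RestrictionOfAnalytic g s) :
    RestrictionOfAnalytic (f + g) s := by
  obtain ⟨F, U, hU, hsU, hF, hFf⟩ := hf
  obtain ⟨G, V, hV, hsV, hG, hGg⟩ := hg
  exact ⟨F + G, U ∩ V, hU.inter hV, subset_inter hsU hsV,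
    fun z hz => (hF z hz.1).add (hG z hz.2), fun x hx => by simp [hFf x hx, hGg x hx]⟩

theorem sub (hf : RestrictionOfAnalytic f s) (hg : RestrictionOfAnalytic g s) :
    RestrictionOfAnalytic (f - g) s := by
  simpa only [sub_eq_add_neg] using hf.add hg.neg

theorem mul (hf : RestrictionOfAnalytic f s) (hg : RestrictionOfAnalytic g s) :
    RestrictionOfAnalytic (f * g) s := by
  obtain ⟨F, U, hU, hsU, hF, hFf⟩ := hf
  obtain ⟨G, V, hV, hsV, hG, hGg⟩ := hg
  exact ⟨F * G, U ∩ V, hU.inter hV, subset_inter hsU hsV,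
    fun z hz => (hF z hz.1).mul (hG z hz.2), fun x hx => by simp [hFf x hx, hGg x hx]⟩

theorem div (hf : RestrictionOfAnalytic f s) (hg : RestrictionOfAnalytic g s)
    (hg₀ : ∀ x ∈ s, g x ≠ 0) : RestrictionOfAnalytic (f / g) s := by
  obtain ⟨F, U, hU, hsU, hF, hFf⟩ := hf
  obtain ⟨G, V, hV, hsV, hG, hGg⟩ := hg
  refine ⟨F / G, U ∩ (V ∩ G ⁻¹' {0}ᶜ), hU.inter (hG.continuousOn.isOpen_inter_preimage hV
    isOpen_compl_singleton), ?_, fun z hz => (hF z hz.1).div (hG z hz.2.1) hz.2.2,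
    fun x hx => by simp [hFf x hx, hGg x hx]⟩
  rintro _ ⟨x, hx, rfl⟩
  exact ⟨hsU (mem_image_of_mem _ hx), hsV (mem_image_of_mem _ hx),
    by simpa [hGg x hx] using hg₀ x hx⟩

theorem comp (hf : RestrictionOfAnalytic f s) (hφ : RestrictionOfAnalytic φ t)
    (hmaps : MapsTo φ t s) : RestrictionOfAnalytic (f ∘ φ) t := by
  obtain ⟨F, U, hU, hsU, hF, hFf⟩ := hf
  obtain ⟨Φ, V, hV, htV, hΦ, hΦφ⟩ := hφ
  refine ⟨F ∘ Φ, V ∩ Φ ⁻¹' U, hΦ.continuousOn.isOpen_inter_preimage hV hU, ?_,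
    fun z hz => (hF _ hz.2).comp (hΦ z hz.1), fun x hx => by
      simp [hΦφ x hx, hFf _ (hmaps hx)]⟩
  rintro _ ⟨x, hx, rfl⟩
  exact ⟨htV (mem_image_of_mem _ hx), by
    simpa [mem_preimage, hΦφ x hx] using hsU (mem_image_of_mem _ (hmaps hx))⟩

end RestrictionOfAnalytic

theorem restrictionOfAnalytic_sqrt : RestrictionOfAnalytic Real.sqrt (Ioi 0) := by
  refine ⟨fun z => z ^ (1 / 2 : ℂ), Complex.slitPlane, Complex.isOpen_slitPlane, ?_,
    fun z hz => analyticAt_id.cpow analyticAt_const hz, fun x hx => ?_⟩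
  · rintro _ ⟨x, hx, rfl⟩
    exact Complex.ofReal_mem_slitPlane.2 hx
  · simp [Real.sqrt_eq_rpow, Complex.ofReal_cpow (le_of_lt hx)]

noncomputable def evenPart (f : ℝ → ℝ) (t : ℝ) : ℝ := (f (√t) + f (-√t)) / 2

noncomputable def oddPart (f : ℝ → ℝ) (t : ℝ) : ℝ := (f (√t) - f (-√t)) / (2 * √t)

theorem evenPart_add_mul_oddPart (f : ℝ → ℝ) {x : ℝ} (hx : x ≠ 0) :
    evenPart f (x ^ 2) + x * oddPart f (x ^ 2) = f x := by
  rw [evenPart, oddPart, Real.sqrt_sq_eq_abs]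
  rcases hx.lt_or_gt with hneg | hpos
  · rw [abs_of_neg hneg, neg_neg]
    field_simp
    ring
  · rw [abs_of_pos hpos]
    field_simp
    ring

section Parts

variable {f : ℝ → ℝ} {s₁ s₂ t : Set ℝ}

theorem RestrictionOfAnalytic.evenPart (hf₁ : RestrictionOfAnalytic f s₁)
    (hf₂ : RestrictionOfAnalytic f s₂) (ht : t ⊆ Ioi 0) (hmaps₁ : MapsTo (fun x => -√x) t s₁)
    (hmaps₂ : MapsTo Real.sqrt t s₂) : RestrictionOfAnalytic (evenPart f) t := by
  have hsqrt := restrictionOfAnalytic_sqrt.mono ht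
  exact ((hf₂.comp hsqrt hmaps₂).add (hf₁.comp hsqrt.neg hmaps₁)).div (.const 2 t)
    fun _ _ => two_ne_zero

theorem RestrictionOfAnalytic.oddPart (hf₁ : RestrictionOfAnalytic f s₁)
    (hf₂ : RestrictionOfAnalytic f s₂) (ht : t ⊆ Ioi 0) (hmaps₁ : MapsTo (fun x => -√x) t s₁)
    (hmaps₂ : MapsTo Real.sqrt t s₂) : RestrictionOfAnalytic (oddPart f) t := by
  have hsqrt := restrictionOfAnalytic_sqrt.mono ht
  exact ((hf₂.comp hsqrt hmaps₂).sub (hf₁.comp hsqrt.neg hmaps₁)).div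
    ((RestrictionOfAnalytic.const 2 t).mul hsqrt) fun x hx =>
      mul_ne_zero two_ne_zero (Real.sqrt_pos.2 (ht hx)).ne'

end Parts

theorem mapsTo_sqrt_Icc_sq {a b : ℝ} (ha : 0 ≤ a) (hb : 0 ≤ b) :
    MapsTo Real.sqrt (Icc (a ^ 2) (b ^ 2)) (Icc a b) := fun _ hx =>
  ⟨Real.sqrt_sq ha ▸ Real.sqrt_le_sqrt hx.1, (Real.sqrt_le_left hb).2 hx.2⟩

theorem mapsTo_neg_sqrt_Icc_sq {a b : ℝ} (ha : 0 ≤ a) (hb : 0 ≤ b) :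
    MapsTo (fun x => -√x) (Icc (a ^ 2) (b ^ 2)) (Icc (-b) (-a)) := fun _ hx =>
  have ⟨hax, hxb⟩ := mapsTo_sqrt_Icc_sq ha hb hx
  ⟨neg_le_neg hxb, neg_le_neg hax⟩

/-- A function `f` on `D = [-η₂, -η₁] ∪ [η₁, η₂]` which is (piecewise) the restriction of
functions analytic near each component decomposes as `f(x) = g(x²) + x h(x²)` with
`g`, `h` restrictions of functions analytic near `[η₁², η₂²]`. -/
theorem even_odd_analytic_decomposition
    (η₁ η₂ : ℝ) (hη₁ : 0 < η₁) (hη₂ : η₁ < η₂) (f : ℝ → ℝ)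
    (hf₁ : RestrictionOfAnalytic f (Set.Icc (-η₂) (-η₁)))
    (hf₂ : RestrictionOfAnalytic f (Set.Icc η₁ η₂)) :
    ∃ g h : ℝ → ℝ,
      RestrictionOfAnalytic g (Set.Icc (η₁ ^ 2) (η₂ ^ 2)) ∧
      RestrictionOfAnalytic h (Set.Icc (η₁ ^ 2) (η₂ ^ 2)) ∧
      ∀ x ∈ Set.Icc (-η₂) (-η₁) ∪ Set.Icc η₁ η₂,
        f x = g (x ^ 2) + x * h (x ^ 2) := by
  have hη₂₀ : 0 ≤ η₂ := (hη₁.trans hη₂).le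
  have hmaps₁ := mapsTo_neg_sqrt_Icc_sq hη₁.le hη₂₀
  have hmaps₂ := mapsTo_sqrt_Icc_sq hη₁.le hη₂₀
  have hpos : Icc (η₁ ^ 2) (η₂ ^ 2) ⊆ Ioi 0 := fun t ht => (pow_pos hη₁ 2).trans_le ht.1
  refine ⟨evenPart f, oddPart f, hf₁.evenPart hf₂ hpos hmaps₁ hmaps₂,
    hf₁.oddPart hf₂ hpos hmaps₁ hmaps₂, fun x hx => (evenPart_add_mul_oddPart f ?_).symm⟩
  rcases hx with hx | hx
  · exact (hx.2.trans_lt (neg_neg_of_pos hη₁)).ne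
  · exact (hη₁.trans_le hx.1).ne'
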